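/- Let P and Q be finite connected posets on disjoint sets X₁ and X₂. Then δ(P ↘ Q) = P ⊗ Q + (P ⊗ 1) ↘ δ(Q) + (1 ⊗ P) ↘ δ(Q). Explicitly, Σ_{v ∈ X₂} δ(P ↘_v Q) = P ⊗ Q + (1/|min(Q)|) Σ_{J ◎ Q} [ (P ↘ J) ⊗ (Q \ J) + J ⊗ (P ↘ (Q \ J)) ], where (P ⊗ 1) ↘ (A ⊗ B) := (P ↘ A) ⊗ B and (1 ⊗ P) ↘ (A ⊗ B) := A ⊗ (P ↘ B). -/

import Mathlib

open scoped Classical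

/-- A finite poset on a subset (`carrier`) of an ambient type `α`. -/
structure FinPoset (α : Type*) where
  carrier : Finset α
  le : α → α → Prop
  mem_of_le : ∀ ⦃x y⦄, le x y → x ∈ carrier ∧ y ∈ carrier
  le_refl : ∀ x ∈ carrier, le x x
  le_trans : ∀ ⦃x y z⦄, le x y → le y z → le x z
  le_antisymm : ∀ ⦃x y⦄, le x y → le y x → x = y

namespace FinPoset

variable {α : Type*} [DecidableEq α]

/-- The strict order `x <_P y`. -/
def lt (P : FinPoset α) (x y : α) : Prop := P.le x y ∧ x ≠ y

/-- `min(P)`: the set of minimal elements of `P`. -/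
noncomputable def minSet (P : FinPoset α) : Finset α :=
  P.carrier.filter (fun x => ∀ y, P.le y x → y = x)

/-- Connectivity of a subset `S`, for the graph with edges between comparable pairs. -/
def ConnOn (P : FinPoset α) (S : Set α) : Prop :=
  ∀ x ∈ S, ∀ y ∈ S,
    Relation.ReflTransGen (fun a b => a ∈ S ∧ b ∈ S ∧ (P.le a b ∨ P.le b a)) x y

/-- A finite poset is connected if it is nonempty and any two elements are linked by a
chain of comparable pairs. -/
def Connected (P : FinPoset α) : Prop :=
  P.carrier.Nonempty ∧ P.ConnOn ↑P.carrier

/-- `I` is a connected component of `S` (for the comparability graph of `P`). -/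
def IsCC (P : FinPoset α) (S I : Set α) : Prop :=
  I.Nonempty ∧ I ⊆ S ∧ P.ConnOn I ∧
    ∀ x ∈ I, ∀ y ∈ S, (P.le x y ∨ P.le y x) → y ∈ I

/-- `I_- = {x ∈ P \ I : ∃ y ∈ I, x ≤_P y}`. -/
noncomputable def below (P : FinPoset α) (I : Finset α) : Finset α :=
  (P.carrier \ I).filter (fun x => ∃ y ∈ I, P.le x y)

/-- `I ◎ P` : `I_-` is a singleton `{w}` with `w ∈ min(P)`, and `I` is a connected
component of `{x ∈ P : w <_P x}`. -/
def Circ (P : FinPoset α) (I : Finset α) : Prop :=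
  ∃ w, P.below I = {w} ∧ w ∈ P.minSet ∧
    P.IsCC {x | x ∈ P.carrier ∧ P.lt w x} ↑I

/-- The induced poset on a subset `S`. -/
def restrict (P : FinPoset α) (S : Finset α) : FinPoset α where
  carrier := P.carrier ∩ S
  le x y := P.le x y ∧ x ∈ S ∧ y ∈ S
  mem_of_le := by
    intro x y h
    rcases P.mem_of_le h.1 with ⟨hx, hy⟩
    exact ⟨Finset.mem_inter.2 ⟨hx, h.2.1⟩, Finset.mem_inter.2 ⟨hy, h.2.2⟩⟩
  le_refl := by
    intro x hx
    rcases Finset.mem_inter.1 hx with ⟨h1, h2⟩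
    exact ⟨P.le_refl x h1, h2, h2⟩
  le_trans := by
    rintro x y z ⟨h1, hx, hy⟩ ⟨h2, _, hz⟩
    exact ⟨P.le_trans h1 h2, hx, hz⟩
  le_antisymm := by
    rintro x y ⟨h1, _, _⟩ ⟨h2, _, _⟩
    exact P.le_antisymm h1 h2

/-- The grafting `P ↘_v Q` of `P` above the vertex `v` of `Q` (auxiliary version, with
the disjointness hypotheses as arguments). -/
def graftAux (P Q : FinPoset α) (v : α) (hd : Disjoint P.carrier Q.carrier)
    (hv : v ∈ Q.carrier) : FinPoset α where
  carrier := P.carrier ∪ Q.carrier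
  le x y := P.le x y ∨ Q.le x y ∨ (Q.le x v ∧ y ∈ P.carrier)
  mem_of_le := by
    rintro x y (h | h | ⟨h1, h2⟩)
    · rcases P.mem_of_le h with ⟨hx, hy⟩
      exact ⟨Finset.mem_union_left _ hx, Finset.mem_union_left _ hy⟩
    · rcases Q.mem_of_le h with ⟨hx, hy⟩
      exact ⟨Finset.mem_union_right _ hx, Finset.mem_union_right _ hy⟩
    · exact ⟨Finset.mem_union_right _ (Q.mem_of_le h1).1, Finset.mem_union_left _ h2⟩
  le_refl := by
    intro x hx
    rcases Finset.mem_union.1 hx with h | h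
    · exact Or.inl (P.le_refl x h)
    · exact Or.inr (Or.inl (Q.le_refl x h))
  le_trans := by
    rintro x y z (h1 | h1 | ⟨h1, h1'⟩) (h2 | h2 | ⟨h2, h2'⟩)
    · exact Or.inl (P.le_trans h1 h2)
    · exact absurd (Q.mem_of_le h2).1 (Finset.disjoint_left.1 hd (P.mem_of_le h1).2)
    · exact absurd (Q.mem_of_le h2).1 (Finset.disjoint_left.1 hd (P.mem_of_le h1).2)
    · exact absurd (P.mem_of_le h2).1 (Finset.disjoint_right.1 hd (Q.mem_of_le h1).2)
    · exact Or.inr (Or.inl (Q.le_trans h1 h2))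
    · exact Or.inr (Or.inr ⟨Q.le_trans h1 h2, h2'⟩)
    · exact Or.inr (Or.inr ⟨h1, (P.mem_of_le h2).2⟩)
    · exact absurd (Q.mem_of_le h2).1 (Finset.disjoint_left.1 hd h1')
    · exact absurd (Q.mem_of_le h2).1 (Finset.disjoint_left.1 hd h1')
  le_antisymm := by
    rintro x y (h1 | h1 | ⟨h1, h1'⟩) (h2 | h2 | ⟨h2, h2'⟩)
    · exact P.le_antisymm h1 h2
    · exact absurd (Q.mem_of_le h2).1 (Finset.disjoint_left.1 hd (P.mem_of_le h1).2)
    · exact absurd (Q.mem_of_le h2).1 (Finset.disjoint_left.1 hd (P.mem_of_le h1).2)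
    · exact absurd (P.mem_of_le h2).1 (Finset.disjoint_right.1 hd (Q.mem_of_le h1).2)
    · exact Q.le_antisymm h1 h2
    · exact absurd (Q.mem_of_le h1).1 (Finset.disjoint_left.1 hd h2')
    · exact absurd (P.mem_of_le h2).2 (Finset.disjoint_right.1 hd (Q.mem_of_le h1).1)
    · exact absurd (Q.mem_of_le h2).1 (Finset.disjoint_left.1 hd h1')
    · exact absurd (Q.mem_of_le h1).1 (Finset.disjoint_left.1 hd h2')
  
/-- The grafting `P ↘_v Q` of `P` above the vertex `v` of `Q`: the poset on
`X₁ ⊔ X₂` restricting to `P` on `X₁` and to `Q` on `X₂`, with `q ≤ p` for `q ∈ X₂`,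
`p ∈ X₁` iff `q ≤_Q v`.  (Junk value when the carriers are not disjoint or `v ∉ Q`.) -/
noncomputable def graft (P Q : FinPoset α) (v : α) : FinPoset α :=
  if h : Disjoint P.carrier Q.carrier ∧ v ∈ Q.carrier then P.graftAux Q v h.1 h.2 else P

/-- The set of subsets `I` of the carrier with `I ◎ P`. -/
noncomputable def circSet (P : FinPoset α) : Finset (Finset α) :=
  P.carrier.powerset.filter (fun I => P.Circ I)

/-- Order isomorphisms from `A` to `B`, encoded as maps `α → α` that are the identity
outside of the carrier of `A`. -/
def Isos (A B : FinPoset α) : Set (α → α) :=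
  {f | Set.BijOn f ↑A.carrier ↑B.carrier ∧
    (∀ x ∈ A.carrier, ∀ y ∈ A.carrier, (A.le x y ↔ B.le (f x) (f y))) ∧
    ∀ x, x ∉ A.carrier → f x = x}

/-- `⟨A, B⟩`: the number of order isomorphisms from `A` to `B`. -/
noncomputable def pairing (A B : FinPoset α) : ℕ := Nat.card ↥(Isos A B)

/-- The NAP coproduct `δ(P) = (1/|min(P)|) Σ_{I ◎ P} I ⊗ (P \ I)`, with values in the
rational vector space spanned by pairs of finite posets. -/
noncomputable def delta (P : FinPoset α) : (FinPoset α × FinPoset α) →₀ ℚ :=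
  ((P.minSet.card : ℚ))⁻¹ • ∑ I ∈ P.circSet,
    Finsupp.single (P.restrict I, P.restrict (P.carrier \ I)) (1 : ℚ)

end FinPoset


/-!
Grafting `P` above `v` does not change the minimal elements: every element of `P` lies above
`v ∈ Q`. The sets `I ◎ (P ↘_v Q)` are read off from those of `Q`: `P` itself, exactly when `v`
is minimal in `Q`; `P ∪ J` for `J ◎ Q` with `v ∈ J`, since then `P` hangs from the component
`J` above the same minimal element; and `J ◎ Q` with `v ∉ J`, no element of which lies below
`v`, so that `P` stays outside of its component.
The induced pieces are `P ⊗ Q`, `(P ↘_v J) ⊗ (Q \ J)` and `J ⊗ (P ↘_v (Q \ J))`. Summing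
over `v ∈ Q`, the first kind yields `|min Q|` copies of `P ⊗ Q`, and the other two sort the
vertices `v` according to whether they lie in `J`.
-/

namespace FinPoset

section Basic

variable {α : Type*}

theorem ext_of_le_iff {A B : FinPoset α} (hc : A.carrier = B.carrier)
    (hle : ∀ x y, A.le x y ↔ B.le x y) : A = B := by
  obtain ⟨c, l, _, _, _, _⟩ := A
  obtain ⟨c', l', _, _, _, _⟩ := B
  obtain rfl : c = c' := hc
  obtain rfl : l = l' := funext₂ fun x y => propext (hle x y)
  rfl

theorem mem_minSet {A : FinPoset α} {x : α} :
    x ∈ A.minSet ↔ x ∈ A.carrier ∧ ∀ y, A.le y x → y = x := Finset.mem_filter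

theorem minSet_subset (A : FinPoset α) : A.minSet ⊆ A.carrier := Finset.filter_subset _ _

theorem minSet_nonempty {A : FinPoset α} (h : A.carrier.Nonempty) : A.minSet.Nonempty := by
  -- an element with the fewest elements below it is minimal
  obtain ⟨x, hx, hmin⟩ := A.carrier.exists_min_image
    (fun x => (A.carrier.filter (A.le · x)).card) h
  refine ⟨x, mem_minSet.2 ⟨hx, fun y hyx => by_contra fun hne => ?_⟩⟩
  have hlt : A.carrier.filter (A.le · y) ⊂ A.carrier.filter (A.le · x) := by
    refine ⟨fun z hz => ?_, fun hsub => hne ?_⟩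
    · simp only [Finset.mem_filter] at hz ⊢
      exact ⟨hz.1, A.le_trans hz.2 hyx⟩
    · have hxy := hsub (Finset.mem_filter.2 ⟨hx, A.le_refl x hx⟩)
      exact A.le_antisymm hyx (Finset.mem_filter.1 hxy).2
  exact (Finset.card_lt_card hlt).not_ge (hmin y (A.mem_of_le hyx).1)

def strictUpper (A : FinPoset α) (w : α) : Set α := {x | x ∈ A.carrier ∧ A.lt w x}

theorem mem_strictUpper {A : FinPoset α} {w x : α} :
    x ∈ A.strictUpper w ↔ x ∈ A.carrier ∧ A.le w x ∧ w ≠ x := Iff.rfl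

def CompAdj (A : FinPoset α) (S : Set α) (a b : α) : Prop :=
  a ∈ S ∧ b ∈ S ∧ (A.le a b ∨ A.le b a)

instance (A : FinPoset α) (S : Set α) : Std.Symm (A.CompAdj S) :=
  ⟨fun _ _ ⟨ha, hb, h⟩ => ⟨hb, ha, h.symm⟩⟩

theorem connOn_iff {A : FinPoset α} {S : Set α} :
    A.ConnOn S ↔ ∀ x ∈ S, ∀ y ∈ S, Relation.ReflTransGen (A.CompAdj S) x y := Iff.rfl

theorem connOn_of_forall_reach {A : FinPoset α} {S : Set α} {c : α}
    (h : ∀ x ∈ S, Relation.ReflTransGen (A.CompAdj S) x c) : A.ConnOn S :=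
  connOn_iff.2 fun x hx y hy => (h x hx).trans (Std.Symm.symm _ _ (h y hy))

theorem ConnOn.of_comparable {A B : FinPoset α} {S : Set α} (h : A.ConnOn S)
    (hAB : ∀ x ∈ S, ∀ y ∈ S, A.le x y ∨ A.le y x → B.le x y ∨ B.le y x) : B.ConnOn S :=
  fun x hx y hy =>
    Relation.ReflTransGen.mono (fun a b ⟨ha, hb, hab⟩ => ⟨ha, hb, hAB a ha b hb hab⟩) _ _
      (h x hx y hy)

theorem ConnOn.subset_of_closed {A : FinPoset α} {S T : Set α} (h : A.ConnOn S) {x : α}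
    (hxS : x ∈ S) (hxT : x ∈ T)
    (hT : ∀ a ∈ S, a ∈ T → ∀ b ∈ S, A.le a b ∨ A.le b a → b ∈ T) : S ⊆ T := by
  intro y hy
  have hxy := connOn_iff.1 h x hxS y hy
  clear hy
  induction hxy with
  | refl => exact hxT
  | tail _ hbc ih => exact hT _ hbc.1 ih _ hbc.2.1 hbc.2.2

theorem IsCC.subset {A : FinPoset α} {S I : Set α} (h : A.IsCC S I) : I ⊆ S := h.2.1

theorem IsCC.connOn {A : FinPoset α} {S I : Set α} (h : A.IsCC S I) : A.ConnOn I := h.2.2.1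

theorem IsCC.mem_of_comparable {A : FinPoset α} {S I : Set α} (h : A.IsCC S I) {x y : α}
    (hx : x ∈ I) (hy : y ∈ S) (hxy : A.le x y ∨ A.le y x) : y ∈ I :=
  h.2.2.2 x hx y hy hxy

end Basic

variable {α : Type*} [DecidableEq α]

theorem circ_iff {A : FinPoset α} {I : Finset α} :
    A.Circ I ↔ ∃ w, A.below I = {w} ∧ w ∈ A.minSet ∧ A.IsCC (A.strictUpper w) I := Iff.rfl

theorem mem_circSet {A : FinPoset α} {I : Finset α} :
    I ∈ A.circSet ↔ I ⊆ A.carrier ∧ A.Circ I := by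
  simp [circSet]

theorem mem_below {A : FinPoset α} {I : Finset α} {x : α} :
    x ∈ A.below I ↔ (x ∈ A.carrier ∧ x ∉ I) ∧ ∃ y ∈ I, A.le x y := by
  simp [below]

@[simp]
theorem restrict_carrier (A : FinPoset α) (S : Finset α) :
    (A.restrict S).carrier = A.carrier ∩ S := rfl

theorem restrict_le {A : FinPoset α} {S : Finset α} {x y : α} :
    (A.restrict S).le x y ↔ A.le x y ∧ x ∈ S ∧ y ∈ S := Iff.rfl

theorem restrict_self (A : FinPoset α) : A.restrict A.carrier = A :=
  ext_of_le_iff (Finset.inter_self _) fun _ _ => ⟨fun h => h.1, fun h => ⟨h, A.mem_of_le h⟩⟩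

theorem graft_eq_graftAux {P Q : FinPoset α} {v : α} (hd : Disjoint P.carrier Q.carrier)
    (hv : v ∈ Q.carrier) : graft P Q v = graftAux P Q v hd hv := dif_pos ⟨hd, hv⟩

section Graft

variable {P Q : FinPoset α} {v : α} {hd : Disjoint P.carrier Q.carrier} {hv : v ∈ Q.carrier}

local notation "R" => graftAux P Q v hd hv

theorem graftAux_carrier : (R).carrier = P.carrier ∪ Q.carrier := rfl

theorem graftAux_le {x y : α} :
    (R).le x y ↔ P.le x y ∨ Q.le x y ∨ (Q.le x v ∧ y ∈ P.carrier) := Iff.rfl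

theorem graftAux_le_of_mem_left {p : α} (hp : p ∈ P.carrier) : (R).le v p :=
  Or.inr (Or.inr ⟨Q.le_refl v hv, hp⟩)

theorem graftAux_le_iff_of_mem_right {x y : α} (hy : y ∈ Q.carrier) :
    (R).le x y ↔ Q.le x y := by
  refine ⟨fun h => ?_, fun h => Or.inr (Or.inl h)⟩
  rcases h with h | h | ⟨-, h⟩
  · exact absurd hy (Finset.disjoint_left.1 hd (P.mem_of_le h).2)
  · exact h
  · exact absurd hy (Finset.disjoint_left.1 hd h)

theorem graftAux_le_iff_of_mem_left {x y : α} (hx : x ∈ P.carrier) :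
    (R).le x y ↔ P.le x y := by
  refine ⟨fun h => ?_, Or.inl⟩
  rcases h with h | h | ⟨h, -⟩
  · exact h
  · exact absurd hx (Finset.disjoint_right.1 hd (Q.mem_of_le h).1)
  · exact absurd hx (Finset.disjoint_right.1 hd (Q.mem_of_le h).1)

theorem graftAux_le_iff_of_mem_right_of_mem_left {x y : α} (hx : x ∈ Q.carrier)
    (hy : y ∈ P.carrier) : (R).le x y ↔ Q.le x v := by
  refine ⟨fun h => ?_, fun h => Or.inr (Or.inr ⟨h, hy⟩)⟩
  rcases h with h | h | ⟨h, -⟩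
  · exact (Finset.disjoint_left.1 hd (P.mem_of_le h).1 hx).elim
  · exact (Finset.disjoint_left.1 hd hy (Q.mem_of_le h).2).elim
  · exact h

theorem graftAux_comparable_iff_of_mem_right {x y : α} (hx : x ∈ Q.carrier)
    (hy : y ∈ Q.carrier) : ((R).le x y ∨ (R).le y x) ↔ (Q.le x y ∨ Q.le y x) := by
  rw [graftAux_le_iff_of_mem_right hy, graftAux_le_iff_of_mem_right hx]

theorem graftAux_comparable_iff_of_mem_left_of_mem_right {x y : α} (hx : x ∈ P.carrier)
    (hy : y ∈ Q.carrier) : ((R).le x y ∨ (R).le y x) ↔ Q.le y v := by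
  rw [graftAux_le_iff_of_mem_left hx, graftAux_le_iff_of_mem_right_of_mem_left hy hx]
  exact or_iff_right fun h => Finset.disjoint_left.1 hd (P.mem_of_le h).2 hy

theorem not_comparable_graftAux_of_lt {x y : α} (hx : x ∈ P.carrier) (hy : Q.lt v y) :
    ¬((R).le x y ∨ (R).le y x) := by
  rw [graftAux_comparable_iff_of_mem_left_of_mem_right hx (Q.mem_of_le hy.1).2]
  exact fun hyv => hy.2 (Q.le_antisymm hy.1 hyv)

theorem minSet_graftAux : (R).minSet = Q.minSet := by
  ext x
  simp only [mem_minSet]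
  constructor
  · rintro ⟨hx, hmin⟩
    rcases Finset.mem_union.1 hx with hxP | hxQ
    · have hvx := hmin v (graftAux_le_of_mem_left hxP)
      exact (Finset.disjoint_left.1 hd hxP (hvx ▸ hv)).elim
    · exact ⟨hxQ, fun y hy => hmin y (Or.inr (Or.inl hy))⟩
  · rintro ⟨hx, hmin⟩
    exact ⟨Finset.mem_union_right _ hx,
      fun y hy => hmin y ((graftAux_le_iff_of_mem_right hx).1 hy)⟩

theorem mem_strictUpper_graftAux {w x : α} (hw : w ∈ Q.carrier) :
    x ∈ (R).strictUpper w ↔ x ∈ Q.strictUpper w ∨ (x ∈ P.carrier ∧ Q.le w v) := by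
  simp only [mem_strictUpper]
  constructor
  · rintro ⟨hx, hle, hne⟩
    rcases Finset.mem_union.1 hx with hxP | hxQ
    · exact Or.inr ⟨hxP, (graftAux_le_iff_of_mem_right_of_mem_left hw hxP).1 hle⟩
    · exact Or.inl ⟨hxQ, (graftAux_le_iff_of_mem_right hxQ).1 hle, hne⟩
  · rintro (⟨hxQ, hle, hne⟩ | ⟨hxP, hle⟩)
    · exact ⟨Finset.mem_union_right _ hxQ, Or.inr (Or.inl hle), hne⟩
    · exact ⟨Finset.mem_union_left _ hxP, Or.inr (Or.inr ⟨hle, hxP⟩),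
        fun h => Finset.disjoint_left.1 hd hxP (h ▸ hw)⟩

theorem below_graftAux_of_subset {J : Finset α} (hJ : J ⊆ Q.carrier) :
    (R).below J = Q.below J := by
  ext x
  simp only [mem_below]
  constructor
  · rintro ⟨⟨-, hxJ⟩, y, hyJ, hle⟩
    have hle' := (graftAux_le_iff_of_mem_right (hJ hyJ)).1 hle
    exact ⟨⟨(Q.mem_of_le hle').1, hxJ⟩, y, hyJ, hle'⟩
  · rintro ⟨⟨hxQ, hxJ⟩, y, hyJ, hle⟩
    exact ⟨⟨Finset.mem_union_right _ hxQ, hxJ⟩, y, hyJ, Or.inr (Or.inl hle)⟩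

theorem below_graftAux_union {J : Finset α} (hJ : J ⊆ Q.carrier) (hvJ : v ∈ J) :
    (R).below (P.carrier ∪ J) = Q.below J := by
  ext x
  simp only [mem_below, graftAux_carrier, Finset.mem_union, not_or]
  constructor
  · rintro ⟨⟨hx, hxP, hxJ⟩, y, hy, hle⟩
    have hxQ : x ∈ Q.carrier := hx.resolve_left hxP
    rcases hy with hyP | hyJ
    · exact ⟨⟨hxQ, hxJ⟩, v, hvJ, (graftAux_le_iff_of_mem_right_of_mem_left hxQ hyP).1 hle⟩
    · exact ⟨⟨hxQ, hxJ⟩, y, hyJ, (graftAux_le_iff_of_mem_right (hJ hyJ)).1 hle⟩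
  · rintro ⟨⟨hxQ, hxJ⟩, y, hyJ, hle⟩
    exact ⟨⟨Or.inr hxQ, Finset.disjoint_right.1 hd hxQ, hxJ⟩, y, Or.inr hyJ,
      Or.inr (Or.inl hle)⟩

theorem below_graftAux_left (hPne : P.carrier.Nonempty) (hvmin : v ∈ Q.minSet) :
    (R).below P.carrier = {v} := by
  ext x
  simp only [mem_below, graftAux_carrier, Finset.mem_union, Finset.mem_singleton]
  constructor
  · rintro ⟨⟨hx, hxP⟩, y, hyP, hle⟩
    have hxQ : x ∈ Q.carrier := hx.resolve_left hxP
    exact (mem_minSet.1 hvmin).2 x ((graftAux_le_iff_of_mem_right_of_mem_left hxQ hyP).1 hle)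
  · rintro rfl
    obtain ⟨p, hp⟩ := hPne
    exact ⟨⟨Or.inr hv, Finset.disjoint_right.1 hd hv⟩, p, hp,
      graftAux_le_of_mem_left hp⟩

theorem graftAux_restrict_of_subset {S : Finset α} (hS : S ⊆ Q.carrier) :
    (R).restrict S = Q.restrict S := by
  refine ext_of_le_iff ?_ fun x y => and_congr_left fun h => graftAux_le_iff_of_mem_right (hS h.2)
  ext x
  have := @hS x
  simp only [restrict_carrier, graftAux_carrier, Finset.mem_inter, Finset.mem_union]
  tauto

theorem graftAux_restrict_left : (R).restrict P.carrier = P :=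
  ext_of_le_iff Finset.union_inter_cancel_left fun _ _ =>
    ⟨fun h => (graftAux_le_iff_of_mem_left h.2.1).1 h.1, fun h => ⟨Or.inl h, P.mem_of_le h⟩⟩

theorem graftAux_restrict_union {S : Finset α} (hS : S ⊆ Q.carrier) (hvS : v ∈ S) :
    (R).restrict (P.carrier ∪ S) = graft P (Q.restrict S) v := by
  have hd' : Disjoint P.carrier (Q.restrict S).carrier := hd.mono_right Finset.inter_subset_left
  have hv' : v ∈ (Q.restrict S).carrier := Finset.mem_inter.2 ⟨hv, hvS⟩
  rw [graft_eq_graftAux hd' hv']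
  refine ext_of_le_iff ?_ fun x y => ?_
  · ext x
    have := @hS x
    simp only [restrict_carrier, graftAux_carrier, Finset.mem_inter, Finset.mem_union]
    tauto
  · have h1 := @P.mem_of_le x y
    have h2 := @Q.mem_of_le x y
    have h3 := @Q.mem_of_le x v
    have h4 : x ∈ P.carrier → x ∉ Q.carrier := fun h => Finset.disjoint_left.1 hd h
    have h5 : y ∈ P.carrier → y ∉ Q.carrier := fun h => Finset.disjoint_left.1 hd h
    simp only [restrict_le, graftAux_le, Finset.mem_union]
    tauto

theorem connOn_graftAux_iff_of_subset {S : Set α} (hS : S ⊆ Q.carrier) :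
    (R).ConnOn S ↔ Q.ConnOn S :=
  ⟨fun h => h.of_comparable fun _ hx _ hy =>
      (graftAux_comparable_iff_of_mem_right (hS hx) (hS hy)).1,
    fun h => h.of_comparable fun _ hx _ hy =>
      (graftAux_comparable_iff_of_mem_right (hS hx) (hS hy)).2⟩

theorem connOn_graftAux_union_iff {J : Finset α} (hJ : J ⊆ Q.carrier) (hvJ : v ∈ J) :
    (R).ConnOn ↑(P.carrier ∪ J) ↔ Q.ConnOn ↑J := by
  constructor
  · intro h x hx y hy
    -- collapsing `P` onto `v` turns paths in `P ∪ J` into paths in `J`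
    let π : α → α := fun a => if a ∈ Q.carrier then a else v
    have hπ : ∀ a ∈ P.carrier ∪ J, π a ∈ J := fun a ha => by
      by_cases haQ : a ∈ Q.carrier
      · simpa [π, haQ] using (Finset.mem_union.1 ha).resolve_left
          fun haP => Finset.disjoint_left.1 hd haP haQ
      · simpa [π, haQ] using hvJ
    have hP : ∀ c ∈ P.carrier ∪ J, c ∉ Q.carrier → c ∈ P.carrier :=
      fun c hc hcQ => (Finset.mem_union.1 hc).resolve_right (hcQ ∘ @hJ c)
    have hstep : ∀ a b, (R).CompAdj ↑(P.carrier ∪ J) a b → Q.CompAdj ↑J (π a) (π b) := by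
      rintro a b ⟨ha, hb, hab⟩
      refine ⟨hπ a ha, hπ b hb, ?_⟩
      by_cases haQ : a ∈ Q.carrier <;> by_cases hbQ : b ∈ Q.carrier <;>
        simp only [π, haQ, hbQ, if_true, if_false]
      · exact (graftAux_comparable_iff_of_mem_right haQ hbQ).1 hab
      · exact Or.inl ((graftAux_comparable_iff_of_mem_left_of_mem_right (hP b hb hbQ) haQ).1
          hab.symm)
      · exact Or.inr ((graftAux_comparable_iff_of_mem_left_of_mem_right (hP a ha haQ) hbQ).1 hab)
      · exact Or.inl (Q.le_refl v hv)
    have hxy := Relation.ReflTransGen.lift π hstep _ _ (h x (by simp [hx]) y (by simp [hy]))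
    simp only [Function.onFun, π, if_pos (hJ hx), if_pos (hJ hy)] at hxy
    exact hxy
  · intro h
    refine connOn_of_forall_reach (c := v) fun x hx => ?_
    rcases Finset.mem_union.1 hx with hxP | hxJ
    · exact .single ⟨hx, by simp [hvJ], Or.inr (graftAux_le_of_mem_left hxP)⟩
    · exact Relation.ReflTransGen.mono (fun a b ⟨ha, hb, hab⟩ => ⟨by simp [ha], by simp [hb],
        hab.imp (Or.inr ∘ Or.inl) (Or.inr ∘ Or.inl)⟩) _ _ (h x hxJ v hvJ)

theorem le_of_mem_strictUpper_graftAux {w p : α} (hw : w ∈ Q.carrier)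
    (hp : p ∈ (R).strictUpper w) (hpP : p ∈ P.carrier) : Q.le w v :=
  (((mem_strictUpper_graftAux hw).1 hp).resolve_left
    fun h => Finset.disjoint_left.1 hd hpP h.1).2

theorem isCC_graftAux_left (hPne : P.carrier.Nonempty) (hPconn : P.ConnOn P.carrier) :
    (R).IsCC ((R).strictUpper v) P.carrier := by
  refine ⟨Finset.coe_nonempty.2 hPne,
    fun x hx => (mem_strictUpper_graftAux hv).2 (Or.inr ⟨hx, Q.le_refl v hv⟩),
    hPconn.of_comparable fun _ _ _ _ => Or.imp Or.inl Or.inl, fun x hx y hy hxy => ?_⟩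
  rcases (mem_strictUpper_graftAux hv).1 hy with ⟨-, hvy⟩ | ⟨hyP, -⟩
  · exact absurd hxy (not_comparable_graftAux_of_lt hx hvy)
  · exact hyP

theorem isCC_graftAux_iff_of_subset {w : α} (hw : w ∈ Q.carrier) {I : Finset α}
    (hI : I ⊆ Q.carrier) (hvI : v ∉ I) :
    (R).IsCC ((R).strictUpper w) I ↔ Q.IsCC (Q.strictUpper w) I := by
  have hup : ∀ x ∈ Q.carrier, (x ∈ (R).strictUpper w ↔ x ∈ Q.strictUpper w) := fun x hx => by
    rw [mem_strictUpper_graftAux hw]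
    exact or_iff_left fun h => Finset.disjoint_left.1 hd h.1 hx
  have hconn : (R).ConnOn I ↔ Q.ConnOn I := connOn_graftAux_iff_of_subset (Finset.coe_subset.2 hI)
  constructor
  · rintro ⟨hne, hsub, hconn', hclos⟩
    refine ⟨hne, fun x hx => (hup x (hI hx)).1 (hsub hx), hconn.1 hconn', fun x hx y hy hxy => ?_⟩
    exact hclos x hx y ((hup y hy.1).2 hy)
      ((graftAux_comparable_iff_of_mem_right (hI hx) hy.1).2 hxy)
  · rintro ⟨hne, hsub, hconn', hclos⟩
    refine ⟨hne, fun x hx => (hup x (hI hx)).2 (hsub hx), hconn.2 hconn', fun x hx y hy hxy => ?_⟩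
    rcases (mem_strictUpper_graftAux hw).1 hy with hyQ | ⟨hyP, -⟩
    · exact hclos x hx y hyQ ((graftAux_comparable_iff_of_mem_right (hI hx) hyQ.1).1 hxy)
    · -- `w < x ≤ v` would put `v` into `I`
      have hxv := (graftAux_comparable_iff_of_mem_left_of_mem_right hyP (hI hx)).1 hxy.symm
      obtain ⟨-, hwx, hwx'⟩ := hsub hx
      have hwv : w ≠ v := fun h => hwx' (Q.le_antisymm hwx (h ▸ hxv))
      exact absurd (hclos x hx v ⟨hv, Q.le_trans hwx hxv, hwv⟩ (Or.inl hxv)) hvI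

theorem isCC_graftAux_union_iff {w : α} (hw : w ∈ Q.carrier) {J : Finset α}
    (hJ : J ⊆ Q.carrier) (hvJ : v ∈ J) :
    (R).IsCC ((R).strictUpper w) ↑(P.carrier ∪ J) ↔ Q.IsCC (Q.strictUpper w) J := by
  rw [IsCC, IsCC, connOn_graftAux_union_iff hJ hvJ]
  constructor
  · rintro ⟨-, hsub, hconn, hclos⟩
    refine ⟨⟨v, hvJ⟩, fun x hx => ?_, hconn, fun x hx y hy hxy => ?_⟩
    · exact ((mem_strictUpper_graftAux hw).1 (hsub (by simp [hx]))).resolve_right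
        fun h => Finset.disjoint_left.1 hd h.1 (hJ hx)
    · have hyI := hclos x (by simp [hx]) y ((mem_strictUpper_graftAux hw).2 (Or.inl hy))
        ((graftAux_comparable_iff_of_mem_right (hJ hx) hy.1).2 hxy)
      simp only [Finset.coe_union, Set.mem_union, Finset.mem_coe] at hyI
      exact hyI.resolve_left fun h => Finset.disjoint_left.1 hd h hy.1
  · rintro ⟨-, hsub, hconn, hclos⟩
    have hwv : Q.le w v := (hsub hvJ).2.1
    refine ⟨⟨v, by simp [hvJ]⟩, fun x hx => ?_, hconn, fun x hx y hy hxy => ?_⟩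
    · rw [mem_strictUpper_graftAux hw]
      rcases Finset.mem_union.1 hx with hxP | hxJ
      · exact Or.inr ⟨hxP, hwv⟩
      · exact Or.inl (hsub hxJ)
    · rcases (mem_strictUpper_graftAux hw).1 hy with hyQ | ⟨hyP, -⟩
      · suffices y ∈ J by simp [this]
        rcases Finset.mem_union.1 hx with hxP | hxJ
        · exact hclos v hvJ y hyQ
            (Or.inr ((graftAux_comparable_iff_of_mem_left_of_mem_right hxP hyQ.1).1 hxy))
        · exact hclos x hxJ y hyQ ((graftAux_comparable_iff_of_mem_right (hJ hxJ) hyQ.1).1 hxy)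
      · simp [hyP]

theorem subset_of_isCC_graftAux (hPconn : P.ConnOn P.carrier) {w : α} (hw : w ∈ Q.carrier)
    {I : Finset α} (hI : (R).IsCC ((R).strictUpper w) I) {p : α} (hpI : p ∈ I)
    (hpP : p ∈ P.carrier) : P.carrier ⊆ I := by
  have hwv := le_of_mem_strictUpper_graftAux hw (hI.subset hpI) hpP
  refine Finset.coe_subset.1 (hPconn.subset_of_closed hpP hpI fun a _ haI b hb hab => ?_)
  exact hI.mem_of_comparable haI ((mem_strictUpper_graftAux hw).2 (Or.inr ⟨hb, hwv⟩))
    (hab.imp Or.inl Or.inl)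

theorem subset_left_of_isCC_graftAux {I : Finset α} (hI : (R).IsCC ((R).strictUpper v) I)
    {p : α} (hpI : p ∈ I) (hpP : p ∈ P.carrier) : I ⊆ P.carrier := by
  refine Finset.coe_subset.1 (hI.connOn.subset_of_closed hpI hpP fun a _ haP b hbI hab => ?_)
  rcases (mem_strictUpper_graftAux hv).1 (hI.subset hbI) with ⟨-, hvb⟩ | ⟨hbP, -⟩
  · exact absurd hab (not_comparable_graftAux_of_lt haP hvb)
  · exact hbP

theorem circ_graftAux_left (hPne : P.carrier.Nonempty) (hPconn : P.ConnOn P.carrier)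
    (hvmin : v ∈ Q.minSet) : (R).Circ P.carrier :=
  ⟨v, below_graftAux_left hPne hvmin, by rwa [minSet_graftAux], isCC_graftAux_left hPne hPconn⟩

theorem circ_graftAux_iff_of_subset {I : Finset α} (hI : I ⊆ Q.carrier) (hvI : v ∉ I) :
    (R).Circ I ↔ Q.Circ I := by
  simp only [circ_iff, below_graftAux_of_subset hI, minSet_graftAux]
  exact exists_congr fun w => and_congr_right fun _ => and_congr_right fun hw =>
    isCC_graftAux_iff_of_subset (Q.minSet_subset hw) hI hvI

theorem circ_graftAux_union_iff {J : Finset α} (hJ : J ⊆ Q.carrier) (hvJ : v ∈ J) :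
    (R).Circ (P.carrier ∪ J) ↔ Q.Circ J := by
  simp only [circ_iff, below_graftAux_union hJ hvJ, minSet_graftAux]
  exact exists_congr fun w => and_congr_right fun _ => and_congr_right fun hw =>
    isCC_graftAux_union_iff (Q.minSet_subset hw) hJ hvJ

theorem circ_graftAux_cases (hPne : P.carrier.Nonempty) (hPconn : P.ConnOn P.carrier)
    {I : Finset α} (hIsub : I ⊆ (R).carrier) (hI : (R).Circ I) :
    (I = P.carrier ∧ v ∈ Q.minSet) ∨ (∃ J ⊆ Q.carrier, v ∈ J ∧ I = P.carrier ∪ J) ∨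
      (I ⊆ Q.carrier ∧ v ∉ I) := by
  obtain ⟨w, -, hwmin, hcc⟩ := circ_iff.1 hI
  rw [minSet_graftAux] at hwmin
  have hw := Q.minSet_subset hwmin
  by_cases hIP : ∃ p ∈ I, p ∈ P.carrier
  · obtain ⟨p, hpI, hpP⟩ := hIP
    have hPI := subset_of_isCC_graftAux hPconn hw hcc hpI hpP
    obtain rfl | hwv := eq_or_ne w v
    · exact Or.inl ⟨(subset_left_of_isCC_graftAux hcc hpI hpP).antisymm hPI, hwmin⟩
    have hvI : v ∈ I := hcc.mem_of_comparable hpI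
      ((mem_strictUpper_graftAux hw).2
        (Or.inl ⟨hv, le_of_mem_strictUpper_graftAux hw (hcc.subset hpI) hpP, hwv⟩))
      (Or.inr (graftAux_le_of_mem_left hpP))
    refine Or.inr (Or.inl ⟨I ∩ Q.carrier, Finset.inter_subset_right,
      Finset.mem_inter.2 ⟨hvI, hv⟩, ?_⟩)
    ext x
    have h1 := @hPI x
    have h2 : x ∈ I → x ∈ P.carrier ∨ x ∈ Q.carrier := fun h => Finset.mem_union.1 (hIsub h)
    simp only [Finset.mem_union, Finset.mem_inter]
    tauto
  · push Not at hIP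
    have hIQ : I ⊆ Q.carrier := fun x hx =>
      (Finset.mem_union.1 (hIsub hx)).resolve_left (hIP x hx)
    refine Or.inr (Or.inr ⟨hIQ, fun hvI => ?_⟩)
    -- `P` lies above `v`, so it would be part of `I`
    obtain ⟨p, hp⟩ := hPne
    have hwv : v ∈ Q.strictUpper w :=
      ((mem_strictUpper_graftAux hw).1 (hcc.subset hvI)).resolve_right
        fun h => Finset.disjoint_left.1 hd h.1 hv
    exact hIP p (hcc.mem_of_comparable hvI ((mem_strictUpper_graftAux hw).2 (Or.inr ⟨hp, hwv.2.1⟩))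
      (Or.inl (graftAux_le_of_mem_left hp))) hp

end Graft

theorem nonempty_of_mem_circSet {A : FinPoset α} {I : Finset α} (hI : I ∈ A.circSet) :
    I.Nonempty := by
  obtain ⟨-, _, -, -, hne, -⟩ := mem_circSet.1 hI
  exact Finset.coe_nonempty.1 hne

def graftSet (P : FinPoset α) (v : α) (J : Finset α) : Finset α :=
  if v ∈ J then P.carrier ∪ J else J

section GraftSet

variable {P Q : FinPoset α} {v : α}

theorem graftSet_inter_right (hd : Disjoint P.carrier Q.carrier) {J : Finset α}
    (hJ : J ⊆ Q.carrier) : graftSet P v J ∩ Q.carrier = J := by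
  unfold graftSet
  split_ifs
  · rw [Finset.union_inter_distrib_right, Finset.disjoint_iff_inter_eq_empty.1 hd,
      Finset.inter_eq_left.2 hJ, Finset.empty_union]
  · exact Finset.inter_eq_left.2 hJ

theorem graftSet_injOn (hd : Disjoint P.carrier Q.carrier) :
    Set.InjOn (graftSet P v) ↑Q.circSet := fun J hJ K hK h => by
  rw [← graftSet_inter_right hd (mem_circSet.1 hJ).1, h,
    graftSet_inter_right hd (mem_circSet.1 hK).1]

theorem carrier_notMem_image_graftSet (hd : Disjoint P.carrier Q.carrier) :
    P.carrier ∉ Q.circSet.image (graftSet P v) := by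
  intro h
  obtain ⟨J, hJ, hPJ⟩ := Finset.mem_image.1 h
  have hJempty := graftSet_inter_right (v := v) hd (mem_circSet.1 hJ).1
  rw [hPJ, Finset.disjoint_iff_inter_eq_empty.1 hd] at hJempty
  exact (nonempty_of_mem_circSet hJ).ne_empty hJempty.symm

variable {hd : Disjoint P.carrier Q.carrier} {hv : v ∈ Q.carrier}

theorem circSet_graftAux (hPne : P.carrier.Nonempty) (hPconn : P.ConnOn P.carrier) :
    (graftAux P Q v hd hv).circSet =
      (if v ∈ Q.minSet then {P.carrier} else ∅) ∪ Q.circSet.image (graftSet P v) := by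
  ext I
  simp only [Finset.mem_union, Finset.mem_image, mem_circSet]
  constructor
  · rintro ⟨hIsub, hI⟩
    rcases circ_graftAux_cases hPne hPconn hIsub hI with
      ⟨rfl, hvmin⟩ | ⟨J, hJ, hvJ, rfl⟩ | ⟨hIQ, hvI⟩
    · exact Or.inl (by simp [hvmin])
    · exact Or.inr ⟨J, ⟨hJ, (circ_graftAux_union_iff hJ hvJ).1 hI⟩, if_pos hvJ⟩
    · exact Or.inr ⟨I, ⟨hIQ, (circ_graftAux_iff_of_subset hIQ hvI).1 hI⟩, if_neg hvI⟩
  · rintro (h | ⟨J, ⟨hJ, hJc⟩, rfl⟩)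
    · split_ifs at h with hvmin
      · rw [Finset.mem_singleton.1 h]
        exact ⟨Finset.subset_union_left, circ_graftAux_left hPne hPconn hvmin⟩
      · simp at h
    · unfold graftSet
      split_ifs with hvJ
      · exact ⟨Finset.union_subset_union subset_rfl hJ, (circ_graftAux_union_iff hJ hvJ).2 hJc⟩
      · exact ⟨hJ.trans Finset.subset_union_right, (circ_graftAux_iff_of_subset hJ hvJ).2 hJc⟩

end GraftSet

theorem delta_graft_of_mem {P Q : FinPoset α} {v : α} (hd : Disjoint P.carrier Q.carrier)
    (hv : v ∈ Q.carrier) (hPne : P.carrier.Nonempty) (hPconn : P.ConnOn P.carrier) :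
    (graft P Q v).delta = (Q.minSet.card : ℚ)⁻¹ •
      ((if v ∈ Q.minSet then Finsupp.single (P, Q) (1 : ℚ) else 0) +
        ∑ J ∈ Q.circSet, if v ∈ J then
          Finsupp.single (graft P (Q.restrict J) v, Q.restrict (Q.carrier \ J)) 1
        else Finsupp.single (Q.restrict J, graft P (Q.restrict (Q.carrier \ J)) v) 1) := by
  have hdisj : Disjoint (if v ∈ Q.minSet then {P.carrier} else ∅)
      (Q.circSet.image (graftSet P v)) := by
    split_ifs
    · exact Finset.disjoint_singleton_left.2 (carrier_notMem_image_graftSet hd)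
    · exact Finset.disjoint_empty_left _
  rw [graft_eq_graftAux hd hv, delta, minSet_graftAux, circSet_graftAux hPne hPconn,
    Finset.sum_union hdisj, Finset.sum_image (graftSet_injOn hd), graftAux_carrier]
  congr 2
  · split_ifs
    · rw [Finset.sum_singleton, graftAux_restrict_left, Finset.union_sdiff_cancel_left hd,
        graftAux_restrict_of_subset subset_rfl, restrict_self]
    · rfl
  · refine Finset.sum_congr rfl fun J hJ => ?_
    have hJQ : J ⊆ Q.carrier := (mem_circSet.1 hJ).1
    unfold graftSet
    split_ifs with hvJ
    · have hc : (P.carrier ∪ Q.carrier) \ (P.carrier ∪ J) = Q.carrier \ J := by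
        ext x
        have hx : x ∈ P.carrier → x ∉ Q.carrier := fun h => Finset.disjoint_left.1 hd h
        simp only [Finset.mem_sdiff, Finset.mem_union]
        tauto
      rw [graftAux_restrict_union hJQ hvJ, hc, graftAux_restrict_of_subset Finset.sdiff_subset]
    · rw [graftAux_restrict_of_subset hJQ, Finset.union_sdiff_distrib,
        Finset.sdiff_eq_self_of_disjoint (hd.mono_right hJQ),
        graftAux_restrict_union Finset.sdiff_subset (Finset.mem_sdiff.2 ⟨hv, hvJ⟩)]

end FinPoset

/-- Compatibility of the coproduct `δ` with the pre-Lie product `↘`: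
`δ(P ↘ Q) = P ⊗ Q + (P ⊗ 1) ↘ δ(Q) + (1 ⊗ P) ↘ δ(Q)`, in the explicit form
`Σ_{v ∈ X₂} δ(P ↘_v Q) = P ⊗ Q + (1/|min(Q)|) Σ_{J ◎ Q}
[(P ↘ J) ⊗ (Q \ J) + J ⊗ (P ↘ (Q \ J))]`. -/
theorem delta_graft {α : Type*} [DecidableEq α] (P Q : FinPoset α)
    (hP : P.Connected) (hQ : Q.Connected) (hd : Disjoint P.carrier Q.carrier) :
    (∑ v ∈ Q.carrier, FinPoset.delta (FinPoset.graft P Q v))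
      = Finsupp.single (P, Q) (1 : ℚ)
        + ((Q.minSet.card : ℚ))⁻¹ • ∑ J ∈ Q.circSet,
          ((∑ v ∈ (Q.restrict J).carrier,
              Finsupp.single
                (FinPoset.graft P (Q.restrict J) v, Q.restrict (Q.carrier \ J)) (1 : ℚ))
            + ∑ v ∈ (Q.restrict (Q.carrier \ J)).carrier,
              Finsupp.single
                (Q.restrict J, FinPoset.graft P (Q.restrict (Q.carrier \ J)) v) (1 : ℚ)) := by
  have hmin : (Q.minSet.card : ℚ) ≠ 0 := by
    exact_mod_cast (FinPoset.minSet_nonempty hQ.1).card_pos.ne'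
  have hcount : ∑ v ∈ Q.carrier, (if v ∈ Q.minSet then Finsupp.single (P, Q) (1 : ℚ) else 0)
      = Q.minSet.card • Finsupp.single (P, Q) (1 : ℚ) := by
    rw [Finset.sum_ite_mem, Finset.inter_eq_right.2 Q.minSet_subset, Finset.sum_const]
  rw [Finset.sum_congr rfl fun v hv => FinPoset.delta_graft_of_mem hd hv hP.1 hP.2,
    ← Finset.smul_sum, Finset.sum_add_distrib, hcount, Finset.sum_comm, smul_add,
    ← Nat.cast_smul_eq_nsmul ℚ, smul_smul, inv_mul_cancel₀ hmin, one_smul]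
  congr 2
  refine Finset.sum_congr rfl fun J _ => ?_
  rw [Finset.sum_ite, Finset.filter_mem_eq_inter, Finset.filter_notMem_eq_sdiff,
    FinPoset.restrict_carrier, FinPoset.restrict_carrier,
    Finset.inter_eq_right.2 Finset.sdiff_subset]
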